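/- arXiv:2305.00164 — 5 statements merged into one kernel-verified Lean document; each statement's English description precedes it below -/
import Mathlib

section
/- For f(t) = |t - 1/2|^k on [0,1] with k ≥ 1, the water-filling depth satisfies ρ_m(ε; f) = ((2k+1)(k+1)/(4k^2))^{k/(2k+1)} · ε^{2k/(2k+1)}, whenever this value does not exceed the range making the level set stay inside [0,1]. -/
open MeasureTheory Set

/-- L2 distance between two functions on [0,1]. -/
noncomputable def L2 (f g : ℝ → ℝ) : ℝ :=
  Real.sqrt (∫ t in (0:ℝ)..1, (f t - g t) ^ 2)

/-- Truncation f_u(t) = max{f(t), u}. -/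
def trunc (f : ℝ → ℝ) (u : ℝ) : ℝ → ℝ := fun t => max (f t) u

/-- z is the unique minimizer of f on [0,1]. -/
def UniqueMinOn (f : ℝ → ℝ) (z : ℝ) : Prop :=
  z ∈ Icc (0:ℝ) 1 ∧ ∀ t ∈ Icc (0:ℝ) 1, t ≠ z → f z < f t

/-- Water-filling depth ρ_m(ε; f), where Mf is the minimum of f. -/
noncomputable def rhoM (ε : ℝ) (f : ℝ → ℝ) (Mf : ℝ) : ℝ :=
  sSup {v | ∃ u, v = u - Mf ∧ L2 f (trunc f u) ≤ ε}

/-- Water-filling width ρ_z(ε; f), where Zf is the minimizer and Mf the minimum of f. -/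
noncomputable def rhoZ (ε : ℝ) (f : ℝ → ℝ) (Zf Mf : ℝ) : ℝ :=
  sSup {v | ∃ t ∈ Icc (0:ℝ) 1, v = |t - Zf| ∧ f t ≤ rhoM ε f Mf + Mf}

/-- Local modulus of continuity of the minimum. -/
noncomputable def omegaM (ε : ℝ) (f : ℝ → ℝ) (Mf : ℝ) : ℝ :=
  sSup {v | ∃ g zg, ConvexOn ℝ (Icc (0:ℝ) 1) g ∧ UniqueMinOn g zg ∧
    L2 f g ≤ ε ∧ v = |Mf - g zg|}

/-- Local modulus of continuity of the minimizer. -/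
noncomputable def omegaZ (ε : ℝ) (f : ℝ → ℝ) (Zf : ℝ) : ℝ :=
  sSup {v | ∃ g zg, ConvexOn ℝ (Icc (0:ℝ) 1) g ∧ UniqueMinOn g zg ∧
    L2 f g ≤ ε ∧ v = |Zf - zg|}

/-!
At level `u` the truncation error is `‖f - f_u‖₂² = ∫₀¹ (u - f)₊²`, which is strictly increasing
in `u` once `u` exceeds `min f`; so `ρ_m(ε; f)` is the level at which this integral equals `ε²`.
For `f = |t - 1/2|^k` and `u = a^k` the integrand lives on `[1/2 - a, 1/2 + a]`, and symmetry
reduces it to `2 ∫₀ᵃ (a^k - s^k)² = 4k²/((k+1)(2k+1)) · a^(2k+1)`. Solving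
`4k²/((k+1)(2k+1)) · a^(2k+1) = ε²` for `u = a^k` gives the stated value.
-/

open intervalIntegral

lemma L2_trunc_eq_sqrt_integral (f : ℝ → ℝ) (u : ℝ) :
    L2 f (trunc f u) = √(∫ t in (0:ℝ)..1, max (u - f t) 0 ^ 2) := by
  unfold L2 trunc
  congr 1
  refine integral_congr fun t _ => ?_
  rcases le_total (f t) u with h | h
  · simp only [max_eq_right h, max_eq_left (sub_nonneg.2 h)]; ring
  · simp only [max_eq_left h, max_eq_right (sub_nonpos.2 h)]; ring

lemma L2_trunc_lt_L2_trunc {f : ℝ → ℝ} (hf : Continuous f) {U u t₀ : ℝ} (hUu : U < u)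
    (ht₀ : t₀ ∈ Icc (0:ℝ) 1) (hft₀ : f t₀ < u) :
    L2 f (trunc f U) < L2 f (trunc f u) := by
  rw [L2_trunc_eq_sqrt_integral, L2_trunc_eq_sqrt_integral]
  have hcont : ∀ v, Continuous fun t => max (v - f t) 0 ^ 2 :=
    fun v => ((continuous_const.sub hf).max continuous_const).pow 2
  refine Real.sqrt_lt_sqrt (integral_nonneg zero_le_one fun t _ => sq_nonneg _) ?_
  refine integral_lt_integral_of_continuousOn_of_le_of_exists_lt zero_lt_one
    (hcont U).continuousOn (hcont u).continuousOn (fun t _ => ?_) ⟨t₀, ht₀, ?_⟩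
  · gcongr
  · have hpos : 0 < u - f t₀ := sub_pos.2 hft₀
    rw [max_eq_left hpos.le]
    exact pow_lt_pow_left₀ (max_lt (by linarith) hpos) (le_max_right _ _) two_ne_zero

lemma rhoM_eq_of_L2_trunc {f : ℝ → ℝ} {ε Mf U : ℝ} (hU : L2 f (trunc f U) ≤ ε)
    (hgt : ∀ u, U < u → ε < L2 f (trunc f u)) :
    rhoM ε f Mf = U - Mf := by
  refine IsGreatest.csSup_eq ⟨⟨U, rfl, hU⟩, ?_⟩
  rintro _ ⟨u, rfl, hu⟩
  by_contra! hlt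
  exact (hgt u (by linarith)).not_ge hu

lemma integral_neg_self_of_even {h : ℝ → ℝ} (hh : Continuous h) (heven : ∀ x, h (-x) = h x)
    (a : ℝ) : ∫ x in -a..a, h x = 2 * ∫ x in (0:ℝ)..a, h x := by
  have hneg : ∫ x in -a..0, h x = ∫ x in (0:ℝ)..a, h x := by
    simpa [heven] using (integral_comp_neg (a := 0) (b := a) h).symm
  rw [← integral_add_adjacent_intervals (b := 0) (hh.intervalIntegrable _ _)
    (hh.intervalIntegrable _ _), hneg, two_mul]

lemma integral_sq_rpow_sub_rpow {k a : ℝ} (hk : -1 < 2 * k) (ha : 0 < a) :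
    ∫ s in (0:ℝ)..a, (a ^ k - s ^ k) ^ 2
      = 2 * k ^ 2 / ((k + 1) * (2 * k + 1)) * a ^ (2 * k + 1) := by
  have hk' : -1 < k := by linarith
  have hsq : ∀ x : ℝ, 0 ≤ x → (x ^ k) ^ 2 = x ^ (2 * k) := fun x hx => by
    rw [← Real.rpow_two, ← Real.rpow_mul hx, mul_comm]
  have hexpand : EqOn (fun s : ℝ => (a ^ k - s ^ k) ^ 2)
      (fun s => a ^ (2 * k) - 2 * a ^ k * s ^ k + s ^ (2 * k)) (uIcc 0 a) := fun s hs => by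
    rw [uIcc_of_le ha.le] at hs
    linear_combination hsq a ha.le + hsq s hs.1
  have i1 : IntervalIntegrable (fun s : ℝ => s ^ k) volume 0 a := intervalIntegrable_rpow' hk'
  have i2 : IntervalIntegrable (fun s : ℝ => s ^ (2 * k)) volume 0 a :=
    intervalIntegrable_rpow' hk
  rw [integral_congr hexpand, integral_add (intervalIntegrable_const.sub (i1.const_mul _)) i2,
    integral_sub intervalIntegrable_const (i1.const_mul _), intervalIntegral.integral_const,
    intervalIntegral.integral_const_mul,
    integral_rpow (Or.inl hk'), integral_rpow (Or.inl hk), Real.zero_rpow (by linarith),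
    Real.zero_rpow (by linarith)]
  have e1 : a * a ^ (2 * k) = a ^ (2 * k + 1) := by
    rw [Real.rpow_add_one ha.ne', mul_comm]
  have e2 : a ^ k * a ^ (k + 1) = a ^ (2 * k + 1) := by
    rw [← Real.rpow_add ha]; ring_nf
  have hk1 : k + 1 ≠ 0 := by linarith
  have hk2 : 2 * k + 1 ≠ 0 := by linarith
  simp only [smul_eq_mul, sub_zero]
  field_simp
  linear_combination ((k + 1) * (2 * k + 1)) * e1 - (2 * (2 * k + 1)) * e2

lemma L2_trunc_abs_sub_rpow {k c a : ℝ} (hk : 0 < k) (ha : 0 < a) (hac : a ≤ c)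
    (hca : c + a ≤ 1) :
    L2 (fun t => |t - c| ^ k) (trunc (fun t => |t - c| ^ k) (a ^ k))
      = √(4 * k ^ 2 / ((k + 1) * (2 * k + 1)) * a ^ (2 * k + 1)) := by
  set h : ℝ → ℝ := fun s => max (a ^ k - |s| ^ k) 0 ^ 2
  have hh : Continuous h :=
    ((continuous_const.sub (continuous_abs.rpow_const fun _ => Or.inr hk.le)).max
      continuous_const).pow 2
  have hvanish : ∀ s ∈ Ioc (-c) (1 - c) \ Ioc (-a) a, h s = 0 := by
    rintro s ⟨-, hs⟩
    have has : a ≤ |s| := by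
      rw [mem_Ioc, not_and_or, not_lt, not_le] at hs
      rcases hs with hs | hs
      · rw [abs_of_neg (by linarith)]; linarith
      · rw [abs_of_pos (by linarith)]; exact hs.le
    have : a ^ k ≤ |s| ^ k := Real.rpow_le_rpow ha.le has hk.le
    simp only [h, max_eq_right (sub_nonpos.2 this), sq, mul_zero]
  rw [L2_trunc_eq_sqrt_integral]
  congr 1
  calc ∫ t in (0:ℝ)..1, max (a ^ k - |t - c| ^ k) 0 ^ 2
      = ∫ s in -c..1 - c, h s := (integral_comp_sub_right h c).trans (by rw [zero_sub])
    _ = ∫ s in -a..a, h s := by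
      rw [integral_of_le (by linarith), integral_of_le (by linarith)]
      exact setIntegral_eq_of_subset_of_forall_sdiff_eq_zero measurableSet_Ioc
        (Ioc_subset_Ioc (by linarith) (by linarith)) hvanish
    _ = 2 * ∫ s in (0:ℝ)..a, h s := integral_neg_self_of_even hh (by simp [h]) a
    _ = 2 * ∫ s in (0:ℝ)..a, (a ^ k - s ^ k) ^ 2 := by
      congr 1
      refine integral_congr fun s hs => ?_
      rw [uIcc_of_le ha.le] at hs
      have : s ^ k ≤ a ^ k := Real.rpow_le_rpow hs.1 hs.2 hk.le
      simp only [h, abs_of_nonneg hs.1, max_eq_left (sub_nonneg.2 this)]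
    _ = _ := by rw [integral_sq_rpow_sub_rpow (by linarith) ha]; ring

/-- ρ_m(ε; f) for f(t) = |t-1/2|^k, when the water level stays within range. -/
theorem stmt1 (k ε : ℝ) (hk : 1 ≤ k) (hε : 0 < ε)
    (hsmall : ((((2*k+1) * (k+1)) / (4 * k ^ 2)) ^ (k/(2*k+1)) *
        ε ^ ((2*k)/(2*k+1))) ^ (1/k) ≤ 1/2) :
    rhoM ε (fun t => |t - 1/2| ^ k) 0 =
      (((2*k+1) * (k+1)) / (4 * k ^ 2)) ^ (k/(2*k+1)) * ε ^ ((2*k)/(2*k+1)) := by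
  have hk0 : 0 < k := by linarith
  set B := ((2*k+1) * (k+1)) / (4 * k ^ 2)
  have hB : 0 < B := by positivity
  set U := B ^ (k/(2*k+1)) * ε ^ ((2*k)/(2*k+1))
  have hU : 0 < U := by positivity
  set a := U ^ (1/k) with ha_def
  have ha : 0 < a := by positivity
  have hak : a ^ k = U := by rw [ha_def, one_div, Real.rpow_inv_rpow hU.le hk0.ne']
  have haB : a ^ (2*k+1) = B * ε ^ 2 := by
    rw [← Real.rpow_mul hU.le, Real.mul_rpow (by positivity) (by positivity),
      ← Real.rpow_mul hB.le, ← Real.rpow_mul hε.le,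
      show k/(2*k+1) * (1/k * (2*k+1)) = 1 by field_simp,
      show (2*k)/(2*k+1) * (1/k * (2*k+1)) = 2 by field_simp, Real.rpow_one, Real.rpow_two]
  have hL2U : L2 (fun t => |t - 1/2| ^ k) (trunc (fun t => |t - 1/2| ^ k) U) = ε := by
    rw [← hak, L2_trunc_abs_sub_rpow hk0 ha hsmall (by linarith), haB,
      show 4 * k ^ 2 / ((k + 1) * (2 * k + 1)) * (B * ε ^ 2) = ε ^ 2 by
        simp only [B]; field_simp,
      Real.sqrt_sq hε.le]
  have hf : Continuous fun t : ℝ => |t - 1/2| ^ k :=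
    (continuous_abs.comp (continuous_sub_right _)).rpow_const fun _ => Or.inr hk0.le
  have hgt : ∀ u, U < u → ε < L2 (fun t => |t - 1/2| ^ k) (trunc (fun t => |t - 1/2| ^ k) u) :=
    fun u hu => hL2U ▸ L2_trunc_lt_L2_trunc hf hu (t₀ := 1/2) (by norm_num)
      (by simp [Real.zero_rpow hk0.ne']; linarith)
  rw [rhoM_eq_of_L2_trunc hL2U.le hgt, sub_zero]
end

section
/- For every convex f in F and every 0 < c < 1, the water-filling depth satisfies c ≤ ρ_m(cε; f)/ρ_m(ε; f) ≤ c^{2/3}. -/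
/-!
Write `W(u) = ‖f - f_u‖₂² = ∫₀¹ (u - f)₊²` and `S(e) = {v | W(M(f) + v) ≤ e²}`, so that
`ρ_m(e; f) = sup S(e)`. Lowering the water level by a factor `c ≤ 1` shrinks `(u - f)₊` pointwise
by at least that factor, so `W(M + c v) ≤ c² W(M + v)`. Raising it by a factor `L ≥ 1` is
controlled by convexity: the homothety of ratio `1/L` about the minimizer `z` gives
`(M + L v - f t)₊ ≤ L (M + v - f (z + (t - z)/L))₊`, and the change of variables costs one more
factor `L`, so `W(M + L v) ≤ L³ W(M + v)`. Hence `c • S(ε) ⊆ S(cε) ⊆ c^{2/3} • S(ε)`.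
-/

open MeasureTheory Set

open scoped Pointwise

noncomputable def truncSqDist (f : ℝ → ℝ) (u : ℝ) : ℝ :=
  ∫ t in (0:ℝ)..1, max (u - f t) 0 ^ 2

lemma L2_trunc (f : ℝ → ℝ) (u : ℝ) : L2 f (trunc f u) = √(truncSqDist f u) := by
  unfold L2 trunc truncSqDist
  congr 1
  refine intervalIntegral.integral_congr fun t _ => ?_
  rcases le_total (f t) u with h | h
  · simp only [max_eq_right h, max_eq_left (sub_nonneg.2 h)]; ring
  · simp only [max_eq_left h, max_eq_right (sub_nonpos.2 h)]; ring

lemma setOf_sub_L2_trunc_le (f : ℝ → ℝ) (M : ℝ) {e : ℝ} (he : 0 ≤ e) :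
    {v | ∃ u, v = u - M ∧ L2 f (trunc f u) ≤ e} = {v | truncSqDist f (M + v) ≤ e ^ 2} := by
  ext v
  simp only [mem_ofPred_eq, L2_trunc, Real.sqrt_le_left he]
  exact ⟨by rintro ⟨u, rfl, hu⟩; rwa [add_sub_cancel], fun hv => ⟨M + v, by ring, hv⟩⟩

lemma UniqueMinOn.isMinOn {f : ℝ → ℝ} {z : ℝ} (hz : UniqueMinOn f z) :
    IsMinOn f (Icc 0 1) z := isMinOn_iff.2 fun t ht => by
  rcases eq_or_ne t z with rfl | hne
  · exact le_rfl
  · exact (hz.2 t ht hne).le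

lemma intervalIntegrable_max_sub_sq_of_continuousOn {g : ℝ → ℝ} {a b m : ℝ} (hab : a ≤ b)
    (hg : ContinuousOn g (Ioo a b)) (hm : ∀ t ∈ Ioo a b, m ≤ g t) (u : ℝ) :
    IntervalIntegrable (fun t => max (u - g t) 0 ^ 2) volume a b := by
  rw [intervalIntegrable_iff_integrableOn_Ioc_of_le hab, integrableOn_Ioc_iff_integrableOn_Ioo]
  have hcont : ContinuousOn (fun t => max (u - g t) 0 ^ 2) (Ioo a b) := by fun_prop
  refine ⟨hcont.aestronglyMeasurable measurableSet_Ioo,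
    .restrict_of_bounded (C := max (u - m) 0 ^ 2) (by simp) ?_⟩
  filter_upwards [ae_restrict_mem measurableSet_Ioo] with t ht
  rw [Real.norm_eq_abs, abs_of_nonneg (by positivity)]
  have := hm t ht
  gcongr

lemma add_div_sub_mem_Ioo {z t L : ℝ} (hz : z ∈ Icc (0:ℝ) 1) (ht : t ∈ Ioo (0:ℝ) 1)
    (hL : 1 ≤ L) : z + (t - z) / L ∈ Ioo (0:ℝ) 1 := by
  have hL0 : 0 < L := one_pos.trans_le hL
  have hform : z + (t - z) / L = (z * (L - 1) + t) / L := by field_simp; ring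
  rw [hform, mem_Ioo, div_lt_one hL0, lt_div_iff₀ hL0]
  constructor <;> nlinarith [hz.1, hz.2, ht.1, ht.2]

lemma integral_comp_homothety_le {g : ℝ → ℝ} {z L : ℝ} (hg : IntervalIntegrable g volume 0 1)
    (hg0 : 0 ≤ g) (hz : z ∈ Icc (0:ℝ) 1) (hL : 1 ≤ L) :
    ∫ t in (0:ℝ)..1, g (z + (t - z) / L) ≤ L * ∫ t in (0:ℝ)..1, g t := by
  have hL0 : 0 < L := one_pos.trans_le hL
  have hshift : ∀ t, z + (t - z) / L = t / L + (z - z / L) := fun t => by ring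
  simp_rw [hshift]
  rw [intervalIntegral.integral_comp_div_add _ hL0.ne', smul_eq_mul]
  gcongr
  refine intervalIntegral.integral_mono_interval ?_ ?_ ?_ (.of_forall hg0) hg
  · rw [zero_div, zero_add, sub_nonneg]; exact div_le_self hz.1 hL
  · rw [zero_div]; linarith [one_div_pos.2 hL0]
  · have : (1 - z) / L ≤ 1 - z := div_le_self (sub_nonneg.2 hz.2) hL
    linarith [sub_div 1 z L]

lemma ConvexOn.mul_comp_homothety_le {s : Set ℝ} {f : ℝ → ℝ} {z t L : ℝ} (hf : ConvexOn ℝ s f)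
    (hz : z ∈ s) (ht : t ∈ s) (hL : 1 ≤ L) :
    L * f (z + (t - z) / L) ≤ (L - 1) * f z + f t := by
  have hL0 : 0 < L := one_pos.trans_le hL
  have h := hf.2 hz ht (sub_nonneg.2 (inv_le_one_of_one_le₀ hL)) (inv_nonneg.2 hL0.le)
    (sub_add_cancel 1 L⁻¹)
  have hpt : (1 - L⁻¹) • z + L⁻¹ • t = z + (t - z) / L := by
    simp only [smul_eq_mul]; field_simp; ring
  rw [hpt, smul_eq_mul, smul_eq_mul] at h
  calc L * f (z + (t - z) / L) ≤ L * ((1 - L⁻¹) * f z + L⁻¹ * f t) := by gcongr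
    _ = (L - 1) * f z + f t := by field_simp

section Scaling

variable {f : ℝ → ℝ} {z : ℝ}

lemma ConvexOn.continuousOn_Ioo {a b : ℝ} (hf : ConvexOn ℝ (Icc a b) f) : ContinuousOn f (Ioo a b) := by
  simpa using hf.continuousOn_interior

lemma ConvexOn.intervalIntegrable_max_sub_sq (hf : ConvexOn ℝ (Icc 0 1) f)
    (hmin : IsMinOn f (Icc 0 1) z) (u : ℝ) :
    IntervalIntegrable (fun t => max (u - f t) 0 ^ 2) volume 0 1 :=
  intervalIntegrable_max_sub_sq_of_continuousOn zero_le_one hf.continuousOn_Ioo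
    (fun _ ht => hmin (Ioo_subset_Icc_self ht)) u

lemma truncSqDist_add_mul_le_sq (hf : ConvexOn ℝ (Icc 0 1) f) (hmin : IsMinOn f (Icc 0 1) z)
    {c : ℝ} (hc0 : 0 ≤ c) (hc1 : c ≤ 1) (v : ℝ) :
    truncSqDist f (f z + c * v) ≤ c ^ 2 * truncSqDist f (f z + v) := by
  unfold truncSqDist
  rw [← intervalIntegral.integral_const_mul]
  refine intervalIntegral.integral_mono_on zero_le_one
    (hf.intervalIntegrable_max_sub_sq hmin _)
    ((hf.intervalIntegrable_max_sub_sq hmin _).const_mul _) fun t ht => ?_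
  have hzt : f z ≤ f t := hmin ht
  have key : max (f z + c * v - f t) 0 ≤ c * max (f z + v - f t) 0 := by
    refine max_le ?_ (by positivity)
    calc f z + c * v - f t = c * (f z + v - f t) + (1 - c) * (f z - f t) := by ring
      _ ≤ c * max (f z + v - f t) 0 + 0 := by
        gcongr
        · exact le_max_left _ _
        · exact mul_nonpos_of_nonneg_of_nonpos (sub_nonneg.2 hc1) (sub_nonpos.2 hzt)
      _ = c * max (f z + v - f t) 0 := add_zero _
  rw [← mul_pow]
  exact pow_le_pow_left₀ (le_max_right _ _) key 2

lemma truncSqDist_add_mul_le_cube (hf : ConvexOn ℝ (Icc 0 1) f) (hmin : IsMinOn f (Icc 0 1) z)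
    (hz : z ∈ Icc (0:ℝ) 1) {L : ℝ} (hL : 1 ≤ L) (v : ℝ) :
    truncSqDist f (f z + L * v) ≤ L ^ 3 * truncSqDist f (f z + v) := by
  set φ : ℝ → ℝ := fun t => z + (t - z) / L
  have hφIoo : MapsTo φ (Ioo 0 1) (Ioo 0 1) := fun t ht => add_div_sub_mem_Ioo hz ht hL
  have hconv : ∀ t ∈ Icc (0:ℝ) 1, f z + L * v - f t ≤ L * (f z + v - f (φ t)) := fun t ht => by
    linarith [hf.mul_comp_homothety_le hz ht hL]
  have hφint : IntervalIntegrable (fun t => max (f z + v - f (φ t)) 0 ^ 2) volume 0 1 :=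
    intervalIntegrable_max_sub_sq_of_continuousOn zero_le_one
      (hf.continuousOn_Ioo.comp (by fun_prop) hφIoo)
      (fun _ ht => hmin (Ioo_subset_Icc_self (hφIoo ht))) _
  calc truncSqDist f (f z + L * v)
      ≤ ∫ t in (0:ℝ)..1, L ^ 2 * max (f z + v - f (φ t)) 0 ^ 2 := by
        refine intervalIntegral.integral_mono_on zero_le_one
          (hf.intervalIntegrable_max_sub_sq hmin _) (hφint.const_mul _) fun t ht => ?_
        rw [← mul_pow]
        refine pow_le_pow_left₀ (le_max_right _ _) (max_le ?_ (by positivity)) 2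
        exact (hconv t ht).trans (by gcongr; exact le_max_left _ _)
    _ = L ^ 2 * ∫ t in (0:ℝ)..1, max (f z + v - f (φ t)) 0 ^ 2 :=
        intervalIntegral.integral_const_mul _ _
    _ ≤ L ^ 2 * (L * truncSqDist f (f z + v)) := by
        gcongr
        exact integral_comp_homothety_le (hf.intervalIntegrable_max_sub_sq hmin _)
          (fun _ => by positivity) hz hL
    _ = L ^ 3 * truncSqDist f (f z + v) := by ring

lemma smul_setOf_truncSqDist_subset (hf : ConvexOn ℝ (Icc 0 1) f)
    (hmin : IsMinOn f (Icc 0 1) z) {c e : ℝ} (hc0 : 0 ≤ c) (hc1 : c ≤ 1) :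
    c • {v | truncSqDist f (f z + v) ≤ e ^ 2} ⊆ {v | truncSqDist f (f z + v) ≤ (c * e) ^ 2} := by
  rintro _ ⟨v, hv, rfl⟩
  calc truncSqDist f (f z + c • v)
      ≤ c ^ 2 * truncSqDist f (f z + v) := truncSqDist_add_mul_le_sq hf hmin hc0 hc1 v
    _ ≤ c ^ 2 * e ^ 2 := by gcongr; exact hv
    _ = (c * e) ^ 2 := by ring

lemma setOf_truncSqDist_subset_smul (hf : ConvexOn ℝ (Icc 0 1) f)
    (hmin : IsMinOn f (Icc 0 1) z) (hz : z ∈ Icc (0:ℝ) 1) {c e : ℝ} (hc0 : 0 < c) (hc1 : c ≤ 1) :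
    {v | truncSqDist f (f z + v) ≤ (c * e) ^ 2} ⊆
      c ^ ((2:ℝ) / 3) • {v | truncSqDist f (f z + v) ≤ e ^ 2} := by
  set k := c ^ ((2:ℝ) / 3)
  have hk0 : 0 < k := Real.rpow_pos_of_pos hc0 _
  have hk1 : k ≤ 1 := Real.rpow_le_one hc0.le hc1 (by norm_num)
  have hk3 : k ^ 3 = c ^ 2 := by
    rw [← Real.rpow_natCast, ← Real.rpow_mul hc0.le]
    norm_num
  intro v hv
  rw [mem_smul_set_iff_inv_smul_mem₀ hk0.ne', mem_ofPred_eq, smul_eq_mul]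
  calc truncSqDist f (f z + k⁻¹ * v)
      ≤ k⁻¹ ^ 3 * truncSqDist f (f z + v) :=
        truncSqDist_add_mul_le_cube hf hmin hz (one_le_inv₀ hk0 |>.2 hk1) v
    _ ≤ k⁻¹ ^ 3 * (c * e) ^ 2 := by gcongr; exact hv
    _ = e ^ 2 := by rw [inv_pow, hk3]; field_simp

end Scaling

/-- Proposition 2.1, first part: c ≤ ρ_m(cε; f)/ρ_m(ε; f) ≤ c^(2/3). -/
theorem stmt2 (f : ℝ → ℝ) (z ε c : ℝ)
    (hf : ConvexOn ℝ (Icc (0:ℝ) 1) f) (hz : UniqueMinOn f z)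
    (hε : 0 < ε) (hc0 : 0 < c) (hc1 : c < 1)
    (hfin : BddAbove {v | ∃ u, v = u - f z ∧ L2 f (trunc f u) ≤ ε})
    (hpos : 0 < rhoM ε f (f z)) :
    c ≤ rhoM (c * ε) f (f z) / rhoM ε f (f z) ∧
      rhoM (c * ε) f (f z) / rhoM ε f (f z) ≤ c ^ ((2:ℝ)/3) := by
  set S : ℝ → Set ℝ := fun e => {v | truncSqDist f (f z + v) ≤ e ^ 2}
  have hρ : ∀ e, 0 ≤ e → rhoM e f (f z) = sSup (S e) := fun e he =>
    congrArg sSup (setOf_sub_L2_trunc_le f (f z) he)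
  rw [setOf_sub_L2_trunc_le f (f z) hε.le] at hfin
  rw [hρ ε hε.le] at hpos ⊢
  rw [hρ (c * ε) (mul_pos hc0 hε).le]
  -- `sSup ∅ = 0` in `ℝ`, so `hpos` rules out an empty level set
  have hne : (S ε).Nonempty := nonempty_iff_ne_empty.2 fun h => by simp [h] at hpos
  have hk : 0 ≤ c ^ ((2:ℝ) / 3) := by positivity
  have hlow : c • S ε ⊆ S (c * ε) := smul_setOf_truncSqDist_subset hf hz.isMinOn hc0.le hc1.le
  have hup : S (c * ε) ⊆ c ^ ((2:ℝ) / 3) • S ε :=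
    setOf_truncSqDist_subset_smul hf hz.isMinOn hz.1 hc0 hc1.le
  have hlower : c * sSup (S ε) ≤ sSup (S (c * ε)) :=
    calc c * sSup (S ε) = sSup (c • S ε) := (Real.sSup_smul_of_nonneg hc0.le _).symm
      _ ≤ sSup (S (c * ε)) := csSup_le_csSup ((hfin.smul_of_nonneg hk).mono hup) hne.smul_set hlow
  have hupper : sSup (S (c * ε)) ≤ c ^ ((2:ℝ) / 3) * sSup (S ε) :=
    calc sSup (S (c * ε)) ≤ sSup (c ^ ((2:ℝ) / 3) • S ε) :=
          csSup_le_csSup (hfin.smul_of_nonneg hk) (hne.smul_set.mono hlow) hup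
      _ = c ^ ((2:ℝ) / 3) * sSup (S ε) := Real.sSup_smul_of_nonneg hk _
  exact ⟨(le_div_iff₀ hpos).2 (by linarith), (div_le_iff₀ hpos).2 (by linarith)⟩
end

section
/- For every convex f in F and ε > 0, the local modulus of continuity of the minimum is sandwiched by the water-filling depth: ρ_m(ε; f) ≤ ω_m(ε; f) ≤ 3 ρ_m(ε; f). -/
open MeasureTheory Set

/-!
For the lower bound, take an admissible level `u > M f` and `0 < δ < u - M f`: the function
`max f (u - δ + δ |t - Z f|)` is convex, lies between `f` and `f_u` on `[0,1]`, hence is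
`ε`-close to `f`, and has unique minimizer `Z f` with minimum `u - δ`.

For the upper bound, let `g` be convex and `ε`-close to `f`. If `M g ≥ M f`, then truncating `f`
at `M g` moves it less than `g` does. If `M g = M f - 3r < M f`, then `f_{M f + r}` is at least as
close to `f` as `g`: on the sublevel set `J = {g ≤ M f - 2r}` one gains at least `3r²`
pointwise, and by convexity `g > M f + r` outside the image `K` of `J` under the homothety of
ratio `4` centred at `Z g`, so the loss, at most `r²`, happens on a set of measure at most `4 |J|`.
-/

open scoped ENNReal

lemma sq_sub_le_sq_sub_of_le_of_le {x y w : ℝ} (hxy : x ≤ y) (hyw : y ≤ w) :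
    (x - y) ^ 2 ≤ (x - w) ^ 2 := by
  nlinarith

lemma sq_sub_max_le_sq_sub {x y m : ℝ} (h : m ≤ y) : (x - max x m) ^ 2 ≤ (x - y) ^ 2 := by
  rcases le_total m x with hm | hm
  · simp [max_eq_left hm, sq_nonneg]
  · rw [max_eq_right hm]
    exact sq_sub_le_sq_sub_of_le_of_le hm h

lemma sq_sub_max_add_le {x M r : ℝ} (hx : M ≤ x) (hr : 0 ≤ r) :
    (x - max x (M + r)) ^ 2 ≤ r ^ 2 := by
  rcases le_total (M + r) x with h | h
  · simp [max_eq_left h, sq_nonneg]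
  · rw [max_eq_right h]; nlinarith

lemma sq_sub_max_add_add_three_mul_sq_le {x y M r : ℝ} (hx : M ≤ x) (hr : 0 ≤ r)
    (hy : y ≤ M - 2 * r) :
    (x - max x (M + r)) ^ 2 + 3 * r ^ 2 ≤ (x - y) ^ 2 := by
  rcases le_total (M + r) x with h | h
  · rw [max_eq_left h]; nlinarith
  · rw [max_eq_right h]; nlinarith

lemma UniqueMinOn.le {f : ℝ → ℝ} {z : ℝ} (hz : UniqueMinOn f z) {t : ℝ}
    (ht : t ∈ Icc (0:ℝ) 1) : f z ≤ f t := by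
  rcases eq_or_ne t z with rfl | hne
  · rfl
  · exact (hz.2 t ht hne).le

lemma convexOn_const_add_mul_abs_sub {s : Set ℝ} (hs : Convex ℝ s) (c z : ℝ) {d : ℝ}
    (hd : 0 ≤ d) : ConvexOn ℝ s fun t => c + d * |t - z| := by
  have h := ((convexOn_norm convex_univ).comp_affineMap
    (AffineMap.id ℝ ℝ - AffineMap.const ℝ ℝ z)).subset (subset_univ s) hs
  exact ((convexOn_const c hs).add (h.smul hd)).congr fun t _ => by simp [Real.norm_eq_abs]

namespace ConvexOn

variable {f : ℝ → ℝ} {a b : ℝ}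

lemma trunc {s : Set ℝ} (hf : ConvexOn ℝ s f) (u : ℝ) : ConvexOn ℝ s (trunc f u) :=
  hf.sup (convexOn_const u hf.1)

lemma two_mul_midpoint_sub_max_le (hf : ConvexOn ℝ (Icc a b) f) {t : ℝ} (ht : t ∈ Icc a b) :
    2 * f ((a + b) / 2) - max (f a) (f b) ≤ f t := by
  have hab : a ≤ b := ht.1.trans ht.2
  have hs : a + b - t ∈ Icc a b := ⟨by linarith [ht.2], by linarith [ht.1]⟩
  have hmid := hf.2 ht hs (by norm_num : (0:ℝ) ≤ 1 / 2) (by norm_num : (0:ℝ) ≤ 1 / 2)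
    (by norm_num)
  rw [smul_eq_mul, smul_eq_mul, smul_eq_mul, smul_eq_mul,
    show 1 / 2 * t + 1 / 2 * (a + b - t) = (a + b) / 2 by ring] at hmid
  linarith [hf.le_max_of_mem_Icc (left_mem_Icc.2 hab) (right_mem_Icc.2 hab) hs]

lemma aestronglyMeasurable_restrict_Icc (hf : ConvexOn ℝ (Icc a b) f) :
    AEStronglyMeasurable f (volume.restrict (Icc a b)) := by
  have hcont := hf.continuousOn_interior
  rw [interior_Icc] at hcont
  rw [Measure.restrict_congr_set Ioo_ae_eq_Icc.symm]
  exact hcont.aestronglyMeasurable measurableSet_Ioo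

lemma memLp_restrict_Icc (hf : ConvexOn ℝ (Icc a b) f) (p : ℝ≥0∞) :
    MemLp f p (volume.restrict (Icc a b)) :=
  memLp_of_bounded ((ae_restrict_iff' measurableSet_Icc).2 <| Filter.Eventually.of_forall
    fun _ ht => ⟨hf.two_mul_midpoint_sub_max_le ht, hf.le_max_of_mem_Icc
      (left_mem_Icc.2 (ht.1.trans ht.2)) (right_mem_Icc.2 (ht.1.trans ht.2)) ht⟩)
    hf.aestronglyMeasurable_restrict_Icc p

lemma integrableOn_sq_sub {g : ℝ → ℝ} (hf : ConvexOn ℝ (Icc a b) f)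
    (hg : ConvexOn ℝ (Icc a b) g) : IntegrableOn (fun t => (f t - g t) ^ 2) (Icc a b) :=
  ((hf.memLp_restrict_Icc 2).sub (hg.memLp_restrict_Icc 2)).integrable_sq

lemma mem_image_homothety_sublevel {E : Type*} [AddCommGroup E] [Module ℝ E] {s : Set E}
    {g : E → ℝ} (hg : ConvexOn ℝ s g) {z t : E} (hz : z ∈ s) (ht : t ∈ s) {c : ℝ}
    (h : 3 * g z + g t ≤ 4 * c) :
    t ∈ AffineMap.homothety z (4:ℝ) '' {x ∈ s | g x ≤ c} := by
  refine ⟨AffineMap.homothety z (1 / 4 : ℝ) t, ⟨?_, ?_⟩, ?_⟩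
  · rw [AffineMap.homothety_eq_lineMap]
    exact hg.1.lineMap_mem hz ht ⟨by norm_num, by norm_num⟩
  · have := hg.2 hz ht (by norm_num : (0:ℝ) ≤ 3 / 4) (by norm_num : (0:ℝ) ≤ 1 / 4)
      (by norm_num)
    rw [AffineMap.homothety_eq_lineMap, AffineMap.lineMap_apply_module]
    simp only [smul_eq_mul] at this
    norm_num at this ⊢
    linarith
  · rw [← AffineMap.homothety_mul_apply]; norm_num

end ConvexOn

lemma L2_eq_sqrt_setIntegral (f g : ℝ → ℝ) :
    L2 f g = √(∫ t in Icc (0:ℝ) 1, (f t - g t) ^ 2) := by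
  rw [L2, intervalIntegral.integral_of_le zero_le_one, integral_Icc_eq_integral_Ioc]

lemma L2_nonneg (f g : ℝ → ℝ) : 0 ≤ L2 f g :=
  Real.sqrt_nonneg _

lemma L2_self (f : ℝ → ℝ) : L2 f f = 0 := by
  simp [L2]

lemma L2_le_L2_of_sq_add_le {f g h φ : ℝ → ℝ}
    (hg : IntegrableOn (fun t => (f t - g t) ^ 2) (Icc 0 1))
    (hh : IntegrableOn (fun t => (f t - h t) ^ 2) (Icc 0 1)) (hφ : IntegrableOn φ (Icc 0 1))
    (hφ0 : 0 ≤ ∫ t in Icc (0:ℝ) 1, φ t)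
    (hle : ∀ t ∈ Icc (0:ℝ) 1, (f t - g t) ^ 2 + φ t ≤ (f t - h t) ^ 2) :
    L2 f g ≤ L2 f h := by
  rw [L2_eq_sqrt_setIntegral, L2_eq_sqrt_setIntegral]
  refine Real.sqrt_le_sqrt ?_
  calc ∫ t in Icc (0:ℝ) 1, (f t - g t) ^ 2
      ≤ (∫ t in Icc (0:ℝ) 1, (f t - g t) ^ 2) + ∫ t in Icc (0:ℝ) 1, φ t := by linarith
    _ = ∫ t in Icc (0:ℝ) 1, ((f t - g t) ^ 2 + φ t) := (integral_add hg hφ).symm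
    _ ≤ ∫ t in Icc (0:ℝ) 1, (f t - h t) ^ 2 :=
      setIntegral_mono_on (hg.add hφ) hh measurableSet_Icc hle

lemma L2_le_L2_of_sq_le {f g h : ℝ → ℝ}
    (hg : IntegrableOn (fun t => (f t - g t) ^ 2) (Icc 0 1))
    (hh : IntegrableOn (fun t => (f t - h t) ^ 2) (Icc 0 1))
    (hle : ∀ t ∈ Icc (0:ℝ) 1, (f t - g t) ^ 2 ≤ (f t - h t) ^ 2) : L2 f g ≤ L2 f h :=
  L2_le_L2_of_sq_add_le (φ := 0) hg hh integrableOn_zero (by simp) (by simpa using hle)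

lemma L2_trunc_le_L2_of_le {f g : ℝ → ℝ} {m : ℝ} (hf : ConvexOn ℝ (Icc 0 1) f)
    (hg : ConvexOn ℝ (Icc 0 1) g) (hm : ∀ t ∈ Icc (0:ℝ) 1, m ≤ g t) :
    L2 f (trunc f m) ≤ L2 f g :=
  L2_le_L2_of_sq_le (hf.integrableOn_sq_sub (hf.trunc m)) (hf.integrableOn_sq_sub hg)
    fun t ht => sq_sub_max_le_sq_sub (hm t ht)

lemma sub_max_le_L2_trunc {f : ℝ → ℝ} (hf : ConvexOn ℝ (Icc 0 1) f) (u : ℝ) :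
    u - max (f 0) (f 1) ≤ L2 f (trunc f u) := by
  set B := max (f 0) (f 1)
  rcases le_or_gt u B with hu | hu
  · linarith [L2_nonneg f (trunc f u)]
  have hpt : ∀ t ∈ Icc (0:ℝ) 1, (u - B) ^ 2 ≤ (f t - trunc f u t) ^ 2 := fun t ht => by
    have hfB : f t ≤ B :=
      hf.le_max_of_mem_Icc (left_mem_Icc.2 zero_le_one) (right_mem_Icc.2 zero_le_one) ht
    rw [trunc, max_eq_right (by linarith)]
    nlinarith
  rw [L2_eq_sqrt_setIntegral, Real.le_sqrt (by linarith) (setIntegral_nonneg measurableSet_Icc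
    fun _ _ => sq_nonneg _)]
  simpa using setIntegral_mono_on (integrableOn_const measure_Icc_lt_top.ne)
    (hf.integrableOn_sq_sub (hf.trunc u)) measurableSet_Icc hpt

lemma bddAbove_rhoM_set {f : ℝ → ℝ} (ε M : ℝ) (hf : ConvexOn ℝ (Icc 0 1) f) :
    BddAbove {v | ∃ u, v = u - M ∧ L2 f (trunc f u) ≤ ε} :=
  ⟨max (f 0) (f 1) + ε - M, by
    rintro _ ⟨u, rfl, hu⟩
    linarith [sub_max_le_L2_trunc hf u]⟩

lemma sub_le_rhoM {f : ℝ → ℝ} {u ε : ℝ} (M : ℝ) (hf : ConvexOn ℝ (Icc 0 1) f)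
    (hu : L2 f (trunc f u) ≤ ε) : u - M ≤ rhoM ε f M :=
  le_csSup (bddAbove_rhoM_set ε M hf) ⟨u, rfl, hu⟩

lemma rhoM_nonneg {f : ℝ → ℝ} {z ε : ℝ} (hf : ConvexOn ℝ (Icc 0 1) f)
    (hz : UniqueMinOn f z) (hε : 0 ≤ ε) : 0 ≤ rhoM ε f (f z) := by
  have h := L2_trunc_le_L2_of_le hf hf fun t ht => hz.le ht
  rw [L2_self] at h
  simpa using sub_le_rhoM (f z) hf (h.trans hε)

lemma setIntegral_indicator_sub_indicator_nonneg {α : Type*} [MeasurableSpace α]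
    {μ : Measure α} {s J K : Set α} (hs : μ s ≠ ⊤) (hJs : J ⊆ s) (hJ : MeasurableSet J)
    (hK : MeasurableSet K) {k c : ℝ} (hk : 0 ≤ k) (hc : 0 ≤ c)
    (hvol : μ K = ENNReal.ofReal k * μ J) :
    0 ≤ ∫ x in s, (J.indicator (fun _ => k * c) x - K.indicator (fun _ => c) x) ∂μ := by
  have hKJ : μ.real (s ∩ K) ≤ k * μ.real J := by
    rw [measureReal_def, measureReal_def, ← ENNReal.toReal_ofReal hk, ← ENNReal.toReal_mul,
      ← hvol]
    refine ENNReal.toReal_mono ?_ (measure_mono inter_subset_right)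
    rw [hvol]
    exact ENNReal.mul_ne_top ENNReal.ofReal_ne_top (measure_ne_top_of_subset hJs hs)
  have hIJ : IntegrableOn (J.indicator fun _ => k * c) s μ :=
    (integrableOn_const hs).indicator hJ
  have hIK : IntegrableOn (K.indicator fun _ => c) s μ := (integrableOn_const hs).indicator hK
  rw [integral_sub hIJ hIK, setIntegral_indicator hJ, setIntegral_indicator hK,
    setIntegral_const, setIntegral_const, inter_eq_self_of_subset_right hJs, smul_eq_mul,
    smul_eq_mul]
  nlinarith [mul_le_mul_of_nonneg_right hKJ hc]

lemma L2_trunc_add_le_L2 {f g : ℝ → ℝ} {M r zg : ℝ} (hf : ConvexOn ℝ (Icc 0 1) f)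
    (hfM : ∀ t ∈ Icc (0:ℝ) 1, M ≤ f t) (hg : ConvexOn ℝ (Icc 0 1) g)
    (hzg : zg ∈ Icc (0:ℝ) 1) (hr : 0 ≤ r) (hgzg : g zg + 3 * r ≤ M) :
    L2 f (trunc f (M + r)) ≤ L2 f g := by
  set J := {t ∈ Icc (0:ℝ) 1 | g t ≤ M - 2 * r}
  set K := AffineMap.homothety zg (4:ℝ) '' J
  have hJ : MeasurableSet J := (hg.convex_le _).ordConnected.measurableSet
  have hK : MeasurableSet K :=
    ((hg.convex_le _).affine_image (AffineMap.homothety zg (4:ℝ))).ordConnected.measurableSet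
  have hvol : volume K = ENNReal.ofReal 4 * volume J := by
    rw [Measure.addHaar_image_homothety, Module.finrank_self]; norm_num
  have mem_K : ∀ t ∈ Icc (0:ℝ) 1, g t ≤ M + r → t ∈ K := fun t ht hgt =>
    hg.mem_image_homothety_sublevel hzg ht (by linarith)
  have hIcc : volume (Icc (0:ℝ) 1) ≠ ⊤ := measure_Icc_lt_top.ne
  refine L2_le_L2_of_sq_add_le (hf.integrableOn_sq_sub (hf.trunc _))
    (hf.integrableOn_sq_sub hg) (((integrableOn_const hIcc).indicator hJ).sub
      ((integrableOn_const hIcc).indicator hK))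
    (setIntegral_indicator_sub_indicator_nonneg hIcc (fun _ ht => ht.1) hJ hK (by norm_num)
      (sq_nonneg r) hvol) fun t ht => ?_
  simp only [Pi.sub_apply, trunc]
  by_cases htJ : t ∈ J
  · rw [indicator_of_mem htJ, indicator_of_mem (mem_K t ht (by linarith [htJ.2]))]
    linarith [sq_sub_max_add_add_three_mul_sq_le (hfM t ht) hr htJ.2]
  by_cases htK : t ∈ K
  · rw [indicator_of_notMem htJ, indicator_of_mem htK]
    linarith [sq_sub_max_add_le (hfM t ht) hr, sq_nonneg (f t - g t)]
  · rw [indicator_of_notMem htJ, indicator_of_notMem htK]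
    have hgt : M + r ≤ g t := le_of_not_ge fun h => htK (mem_K t ht h)
    linarith [sq_sub_max_le_sq_sub (x := f t) hgt]

lemma abs_sub_le_three_mul_rhoM {f g : ℝ → ℝ} {z zg ε : ℝ} (hf : ConvexOn ℝ (Icc 0 1) f)
    (hz : UniqueMinOn f z) (hε : 0 ≤ ε) (hg : ConvexOn ℝ (Icc 0 1) g) (hzg : UniqueMinOn g zg)
    (hfg : L2 f g ≤ ε) : |f z - g zg| ≤ 3 * rhoM ε f (f z) := by
  have hρ := rhoM_nonneg hf hz hε
  rcases le_total (f z) (g zg) with h | h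
  · have hmem := sub_le_rhoM (f z) hf <|
      (L2_trunc_le_L2_of_le hf hg fun t ht => hzg.le ht).trans hfg
    rw [abs_of_nonpos (by linarith)]
    linarith
  · have hmem := sub_le_rhoM (f z) hf <|
      (L2_trunc_add_le_L2 hf (fun t ht => hz.le ht) hg hzg.1 (r := (f z - g zg) / 3)
        (by linarith) (by linarith)).trans hfg
    rw [abs_of_nonneg (by linarith)]
    linarith

lemma omegaM_le_three_mul_rhoM {f : ℝ → ℝ} {z ε : ℝ} (hf : ConvexOn ℝ (Icc 0 1) f)
    (hz : UniqueMinOn f z) (hε : 0 ≤ ε) : omegaM ε f (f z) ≤ 3 * rhoM ε f (f z) := by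
  refine Real.sSup_le ?_ (by linarith [rhoM_nonneg hf hz hε])
  rintro _ ⟨g, zg, hg, hzg, hfg, rfl⟩
  exact abs_sub_le_three_mul_rhoM hf hz hε hg hzg hfg

lemma bddAbove_omegaM_set {f : ℝ → ℝ} {z ε : ℝ} (hf : ConvexOn ℝ (Icc 0 1) f)
    (hz : UniqueMinOn f z) (hε : 0 ≤ ε) :
    BddAbove {v | ∃ g zg, ConvexOn ℝ (Icc (0:ℝ) 1) g ∧ UniqueMinOn g zg ∧
      L2 f g ≤ ε ∧ v = |f z - g zg|} := by
  refine ⟨3 * rhoM ε f (f z), ?_⟩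
  rintro _ ⟨g, zg, hg, hzg, hfg, rfl⟩
  exact abs_sub_le_three_mul_rhoM hf hz hε hg hzg hfg

lemma sub_sub_le_omegaM {f : ℝ → ℝ} {z u δ ε : ℝ} (hf : ConvexOn ℝ (Icc 0 1) f)
    (hz : UniqueMinOn f z) (hu : L2 f (trunc f u) ≤ ε) (hδ : 0 < δ) (hδu : δ < u - f z) :
    u - δ - f z ≤ omegaM ε f (f z) := by
  set g : ℝ → ℝ := fun t => max (f t) (u - δ + δ * |t - z|)
  have hg : ConvexOn ℝ (Icc 0 1) g :=
    hf.sup (convexOn_const_add_mul_abs_sub (convex_Icc 0 1) _ _ hδ.le)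
  have hgz : g z = u - δ := by
    simp only [g, sub_self, abs_zero, mul_zero, add_zero]
    exact max_eq_right (by linarith)
  have hzg : UniqueMinOn g z := ⟨hz.1, fun t _ htz => by
    have : 0 < δ * |t - z| := mul_pos hδ (abs_pos.2 (sub_ne_zero.2 htz))
    linarith [le_max_right (f t) (u - δ + δ * |t - z|)]⟩
  have hfg : L2 f g ≤ ε := by
    refine le_trans (L2_le_L2_of_sq_le (hf.integrableOn_sq_sub hg)
      (hf.integrableOn_sq_sub (hf.trunc u)) fun t ht =>
        sq_sub_le_sq_sub_of_le_of_le (le_max_left _ _) (max_le_max le_rfl ?_)) hu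
    have : |t - z| ≤ 1 :=
      abs_sub_le_iff.2 ⟨by linarith [ht.2, hz.1.1], by linarith [ht.1, hz.1.2]⟩
    nlinarith
  refine le_csSup (bddAbove_omegaM_set hf hz ((L2_nonneg _ _).trans hu))
    ⟨g, z, hg, hzg, hfg, ?_⟩
  rw [hgz, abs_of_nonpos (by linarith)]; ring

lemma rhoM_le_omegaM {f : ℝ → ℝ} {z ε : ℝ} (hf : ConvexOn ℝ (Icc 0 1) f)
    (hz : UniqueMinOn f z) (hε : 0 ≤ ε) : rhoM ε f (f z) ≤ omegaM ε f (f z) := by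
  have hω : 0 ≤ omegaM ε f (f z) := le_csSup (bddAbove_omegaM_set hf hz hε)
    ⟨f, z, hf, hz, (L2_self f).trans_le hε, by simp⟩
  refine Real.sSup_le ?_ hω
  rintro _ ⟨u, rfl, hu⟩
  rcases le_or_gt u (f z) with h | h
  · linarith
  refine le_of_forall_sub_le fun δ hδ => ?_
  have := sub_sub_le_omegaM hf hz hu (lt_min hδ (half_pos (sub_pos.2 h)))
    ((min_le_right _ _).trans_lt (half_lt_self (sub_pos.2 h)))
  linarith [min_le_left δ ((u - f z) / 2)]

/-- Proposition 2.2 for the minimum: ρ_m(ε;f) ≤ ω_m(ε;f) ≤ 3ρ_m(ε;f). -/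
theorem stmt4 (f : ℝ → ℝ) (z ε : ℝ)
    (hf : ConvexOn ℝ (Icc (0:ℝ) 1) f) (hz : UniqueMinOn f z) (hε : 0 < ε) :
    rhoM ε f (f z) ≤ omegaM ε f (f z) ∧ omegaM ε f (f z) ≤ 3 * rhoM ε f (f z) :=
  ⟨rhoM_le_omegaM hf hz hε.le, omegaM_le_three_mul_rhoM hf hz hε.le⟩
end

section
/- For f(t) = |t − 1/2|^k on [0,1] with k ≥ 1 and ε > 0 small, the water-filling width satisfies ρ_z(ε; f) = min{ ((2k+1)(k+1)/(4k^2))^{1/(2k+1)} ε^{2/(2k+1)}, 1/2 }. -/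
/-!
For `f t = |t - 1/2| ^ k` and `0 ≤ r ≤ 1/2`, the level `u = r ^ k` floods exactly
`[1/2 - r, 1/2 + r]`, and by symmetry and direct integration
`‖f - f_u‖₂² = ∫ (u - f)₊² = C r ^ (2k+1)` with `C = 4k² / ((k+1)(2k+1))`.
Under the smallness assumption every admissible level `u > 0` is such an `r ^ k`, so
`ρ_m = ρ ^ k` for the largest `ρ ≤ 1/2` with `C ρ ^ (2k+1) ≤ ε²`, namely
`ρ = min ((ε² / C) ^ (1/(2k+1))) (1/2)`. The sublevel set `{f ≤ ρ ^ k}` is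
`[1/2 - ρ, 1/2 + ρ]`, hence `ρ_z = ρ`.
-/

open MeasureTheory Set

open intervalIntegral

noncomputable def fillEnergy (f : ℝ → ℝ) (u : ℝ) : ℝ :=
  ∫ t in (0:ℝ)..1, (max (u - f t) 0) ^ 2

lemma L2_trunc_le_iff {f : ℝ → ℝ} {u ε : ℝ} (hε : 0 ≤ ε) :
    L2 f (trunc f u) ≤ ε ↔ fillEnergy f u ≤ ε ^ 2 := by
  have hsq : ∀ t, (f t - trunc f u t) ^ 2 = (max (u - f t) 0) ^ 2 := fun t => by
    rcases le_total (f t) u with h | h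
    · rw [trunc, max_eq_right h, max_eq_left (sub_nonneg.mpr h)]; ring
    · rw [trunc, max_eq_left h, max_eq_right (sub_nonpos.mpr h)]; ring
  simp only [L2, fillEnergy, hsq, Real.sqrt_le_left hε]

lemma le_add_of_fillEnergy_le {f : ℝ → ℝ} {M u ε : ℝ} (hf : Continuous f)
    (hM : ∀ t ∈ Icc (0:ℝ) 1, f t ≤ M) (hε : 0 ≤ ε) (h : fillEnergy f u ≤ ε ^ 2) :
    u ≤ M + ε := by
  rcases le_or_gt u M with hu | hu
  · linarith
  have hint : IntervalIntegrable (fun t => (max (u - f t) 0) ^ 2) volume 0 1 :=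
    (((continuous_const.sub hf).max continuous_const).pow 2).intervalIntegrable _ _
  have hle : (u - M) ^ 2 ≤ fillEnergy f u := by
    simpa [fillEnergy] using integral_mono_on zero_le_one intervalIntegrable_const hint fun t ht =>
      pow_le_pow_left₀ (by linarith) ((sub_le_sub_left (hM t ht) u).trans (le_max_left _ _)) 2
  nlinarith

lemma integral_rpow_sub_rpow_sq {k r : ℝ} (hk : -1 < 2 * k) (hr : 0 ≤ r) :
    ∫ s in (0:ℝ)..r, (r ^ k - s ^ k) ^ 2
      = 2 * k ^ 2 / ((k + 1) * (2 * k + 1)) * r ^ (2 * k + 1) := by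
  have hsq : ∀ x : ℝ, 0 ≤ x → (x ^ k) ^ 2 = x ^ (2 * k) := fun x hx => by
    rw [← Real.rpow_natCast, ← Real.rpow_mul hx, mul_comm]; norm_num
  have hexp : EqOn (fun s => (r ^ k - s ^ k) ^ 2)
      (fun s => r ^ (2 * k) - 2 * r ^ k * s ^ k + s ^ (2 * k)) (uIcc 0 r) := fun s hs => by
    rw [uIcc_of_le hr] at hs
    simp only [sub_sq, hsq r hr, hsq s hs.1]
  have hk1 : IntervalIntegrable (fun s : ℝ => s ^ k) volume 0 r :=
    intervalIntegral.intervalIntegrable_rpow' (by linarith)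
  have hk2 : IntervalIntegrable (fun s : ℝ => s ^ (2 * k)) volume 0 r :=
    intervalIntegral.intervalIntegrable_rpow' hk
  have h2k : r ^ (2 * k + 1) = r ^ (2 * k) * r := by
    rw [Real.rpow_add' hr (by linarith), Real.rpow_one]
  have hkk : r ^ (2 * k + 1) = r ^ k * r ^ (k + 1) := by
    rw [← Real.rpow_add' hr (by linarith)]; ring_nf
  rw [integral_congr hexp, integral_add (intervalIntegrable_const.sub (hk1.const_mul _)) hk2,
    integral_sub intervalIntegrable_const (hk1.const_mul _), intervalIntegral.integral_const,
    intervalIntegral.integral_const_mul, integral_rpow (Or.inl (by linarith)),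
    integral_rpow (Or.inl hk),
    Real.zero_rpow (by linarith), Real.zero_rpow (by linarith), smul_eq_mul]
  have : k + 1 ≠ 0 := by linarith
  have : 2 * k + 1 ≠ 0 := by linarith
  field_simp
  linear_combination (4 * k + 2) * hkk - (2 * k ^ 2 + 3 * k + 1) * h2k

lemma integral_comp_sub_of_even {g : ℝ → ℝ} (hg : Continuous g) (heven : ∀ s, g (-s) = g s)
    (c a : ℝ) : ∫ t in (c - a)..(c + a), g (t - c) = 2 * ∫ s in (0:ℝ)..a, g s := by
  rw [integral_comp_sub_right, sub_sub_cancel_left, add_sub_cancel_left,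
    ← integral_add_adjacent_intervals (hg.intervalIntegrable _ 0) (hg.intervalIntegrable 0 _)]
  have hneg : ∫ s in (-a)..0, g s = ∫ s in (0:ℝ)..a, g s := by
    simpa [heven] using (integral_comp_neg (a := 0) (b := a) g).symm
  rw [hneg]; ring

lemma mul_rpow_le_sq_iff {C ε p r : ℝ} (hC : 0 < C) (hε : 0 ≤ ε) (hp : 0 < p) (hr : 0 ≤ r) :
    C * r ^ p ≤ ε ^ 2 ↔ r ≤ C⁻¹ ^ (1 / p) * ε ^ (2 / p) := by
  have hε2 : (ε ^ 2) ^ p⁻¹ = ε ^ (2 / p) := by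
    rw [← Real.rpow_natCast, ← Real.rpow_mul hε, Nat.cast_ofNat, div_eq_mul_inv]
  rw [← le_inv_mul_iff₀ hC, ← Real.le_rpow_inv_iff_of_pos hr (by positivity) hp,
    Real.mul_rpow (by positivity) (by positivity), hε2, one_div]

lemma fillEnergy_abs_sub_half_rpow {k r : ℝ} (hk : 0 < k) (hr0 : 0 ≤ r) (hr : r ≤ 1/2) :
    fillEnergy (fun t => |t - 1/2| ^ k) (r ^ k)
      = 4 * k ^ 2 / ((k + 1) * (2 * k + 1)) * r ^ (2 * k + 1) := by
  set g : ℝ → ℝ := fun s => (max (r ^ k - |s| ^ k) 0) ^ 2 with hg_def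
  have hg : Continuous g :=
    ((continuous_const.sub (continuous_abs.rpow_const fun _ => Or.inr hk.le)).max
      continuous_const).pow 2
  have hdry : ∫ s in r..(1/2), g s = 0 := by
    rw [integral_congr (g := fun _ => 0), intervalIntegral.integral_zero]
    intro s hs
    rw [uIcc_of_le hr] at hs
    have : r ^ k ≤ |s| ^ k :=
      Real.rpow_le_rpow hr0 (hs.1.trans (le_abs_self s)) hk.le
    simp [hg_def, max_eq_right (sub_nonpos.mpr this)]
  have hwet : ∫ s in (0:ℝ)..r, g s = ∫ s in (0:ℝ)..r, (r ^ k - s ^ k) ^ 2 := by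
    refine integral_congr fun s hs => ?_
    rw [uIcc_of_le hr0] at hs
    simp only [hg_def, abs_of_nonneg hs.1,
      max_eq_left (sub_nonneg.mpr (Real.rpow_le_rpow hs.1 hs.2 hk.le))]
  calc fillEnergy (fun t => |t - 1/2| ^ k) (r ^ k)
      = ∫ t in (1/2 - 1/2 : ℝ)..(1/2 + 1/2), g (t - 1/2) := by norm_num [fillEnergy, hg_def]
    _ = 2 * ∫ s in (0:ℝ)..(1/2), g s :=
        integral_comp_sub_of_even hg (fun s => by simp [hg_def]) _ _
    _ = 2 * ∫ s in (0:ℝ)..r, (r ^ k - s ^ k) ^ 2 := by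
        rw [← integral_add_adjacent_intervals (hg.intervalIntegrable 0 r)
          (hg.intervalIntegrable r _), hdry, add_zero, hwet]
    _ = 4 * k ^ 2 / ((k + 1) * (2 * k + 1)) * r ^ (2 * k + 1) := by
        rw [integral_rpow_sub_rpow_sq (by linarith) hr0]; ring

lemma rhoM_abs_sub_half_rpow {k ε ρ : ℝ} (hk : 0 < k) (hε : 0 ≤ ε)
    (hρ : IsGreatest {r | r ∈ Icc (0:ℝ) (1/2) ∧
      fillEnergy (fun t => |t - 1/2| ^ k) (r ^ k) ≤ ε ^ 2} ρ)
    (hsmall : rhoM ε (fun t => |t - 1/2| ^ k) 0 ≤ (1/2 : ℝ) ^ k) :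
    rhoM ε (fun t => |t - 1/2| ^ k) 0 = ρ ^ k := by
  set S := {u | fillEnergy (fun t => |t - 1/2| ^ k) u ≤ ε ^ 2}
  have hS : rhoM ε (fun t => |t - 1/2| ^ k) 0 = sSup S := by
    simp only [rhoM, sub_zero, exists_eq_left', L2_trunc_le_iff hε, S]
  have hbdd : BddAbove S := by
    refine ⟨(1/2 : ℝ) ^ k + ε, fun u hu => le_add_of_fillEnergy_le
      ((continuous_abs.comp (continuous_sub_right _)).rpow_const fun _ => Or.inr hk.le)
      (fun t ht => ?_) hε hu⟩
    exact Real.rpow_le_rpow (abs_nonneg _)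
      (abs_le.mpr ⟨by linarith [ht.1], by linarith [ht.2]⟩) hk.le
  have hub : ∀ u ∈ S, u ≤ ρ ^ k := by
    intro u hu
    rcases le_or_gt u 0 with hu0 | hu0
    · exact hu0.trans (Real.rpow_nonneg hρ.1.1.1 k)
    have hrk : (u ^ k⁻¹) ^ k = u := Real.rpow_inv_rpow hu0.le hk.ne'
    have hr0 : 0 ≤ u ^ k⁻¹ := Real.rpow_nonneg hu0.le _
    have hr : u ^ k⁻¹ ≤ 1/2 := by
      rw [← Real.rpow_le_rpow_iff hr0 (by norm_num) hk, hrk]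
      exact (le_csSup hbdd hu).trans (hS ▸ hsmall)
    rw [← hrk]
    exact Real.rpow_le_rpow hr0 (hρ.2 ⟨⟨hr0, hr⟩, by rwa [hrk]⟩) hk.le
  rw [hS]
  exact IsGreatest.csSup_eq ⟨hρ.1.2, hub⟩

lemma rhoZ_abs_sub_half_rpow {k ε ρ : ℝ} (hk : 0 < k) (hρ0 : 0 ≤ ρ) (hρ : ρ ≤ 1/2)
    (hM : rhoM ε (fun t => |t - 1/2| ^ k) 0 = ρ ^ k) :
    rhoZ ε (fun t => |t - 1/2| ^ k) (1/2) 0 = ρ := by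
  refine IsGreatest.csSup_eq ⟨⟨1/2 + ρ, ⟨by linarith, by linarith⟩, ?_, ?_⟩, ?_⟩
  · simp [abs_of_nonneg hρ0]
  · show |1/2 + ρ - 1/2| ^ k ≤ rhoM ε _ 0 + 0
    rw [hM, add_zero, add_sub_cancel_left, abs_of_nonneg hρ0]
  · rintro v ⟨t, -, rfl, ht⟩
    rw [hM, add_zero] at ht
    exact (Real.rpow_le_rpow_iff (abs_nonneg _) hρ0 hk).mp ht

/-- ρ_z(ε; f) for f(t) = |t-1/2|^k when ε is small (level set within [0,1]). -/
theorem stmt10 (k ε : ℝ) (hk : 1 ≤ k) (hε : 0 < ε)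
    (hsmall : rhoM ε (fun t => |t - 1/2| ^ k) 0 ≤ (1/2 : ℝ) ^ k) :
    rhoZ ε (fun t => |t - 1/2| ^ k) (1/2) 0 =
      min ((((2*k+1) * (k+1)) / (4 * k ^ 2)) ^ ((1:ℝ)/(2*k+1)) * ε ^ ((2:ℝ)/(2*k+1)))
        (1/2) := by
  have hk0 : 0 < k := by linarith
  have hC : 0 < 4 * k ^ 2 / ((k + 1) * (2 * k + 1)) := by positivity
  have hbase : ((2*k+1) * (k+1)) / (4 * k ^ 2) = (4 * k ^ 2 / ((k + 1) * (2 * k + 1)))⁻¹ := by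
    rw [inv_div]; ring
  set R := (((2*k+1) * (k+1)) / (4 * k ^ 2)) ^ ((1:ℝ)/(2*k+1)) * ε ^ ((2:ℝ)/(2*k+1))
  have hρ0 : 0 ≤ min R (1/2) := le_min (by positivity) (by norm_num)
  have hradius : ∀ r ∈ Icc (0:ℝ) (1/2),
      fillEnergy (fun t => |t - 1/2| ^ k) (r ^ k) ≤ ε ^ 2 ↔ r ≤ R := fun r hr => by
    rw [fillEnergy_abs_sub_half_rpow hk0 hr.1 hr.2,
      mul_rpow_le_sq_iff hC hε.le (by linarith) hr.1, ← hbase]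
  have hρ : IsGreatest {r | r ∈ Icc (0:ℝ) (1/2) ∧
      fillEnergy (fun t => |t - 1/2| ^ k) (r ^ k) ≤ ε ^ 2} (min R (1/2)) :=
    ⟨⟨⟨hρ0, min_le_right _ _⟩, (hradius _ ⟨hρ0, min_le_right _ _⟩).2 (min_le_left _ _)⟩,
      fun r ⟨hr, hE⟩ => le_min ((hradius r hr).1 hE) hr.2⟩
  exact rhoZ_abs_sub_half_rpow hk0 hρ0 (min_le_right _ _)
    (rhoM_abs_sub_half_rpow hk0 hε.le hρ hsmall)
end

section
/- Let f be convex on [0,1] with values known at the grid points i/n, i = 0,…,n, and let i_m = argmin_i f(i/n) with i_m ≤ n−2. Then the minimizer Z(f) of f on [0,1] satisfies Z(f) ≤ t*, where t* is the horizontal coordinate of the intersection of the horizontal line y = f(i_m/n) with the line through ((i_m+1)/n, f((i_m+1)/n)) with slope n(f((i_m+2)/n) − f((i_m+1)/n)), provided that slope is positive. -/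
open MeasureTheory Set

/-!
Let `a < b < c` be the grid points `i_m/n`, `(i_m+1)/n`, `(i_m+2)/n`. Monotonicity of the slopes
of `f` puts the minimizer `z` to the left of `b`: otherwise `0 ≤ slope f a b ≤ slope f b z` would
give `f a ≤ f z`. Left of `b` the secant line through `b` and `c` lies below `f`, so its value at
`z` is at most `f z ≤ f a`; solving for `z` gives `z ≤ t*`.
-/

section SecantLine

variable {𝕜 : Type*} [Field 𝕜] [LinearOrder 𝕜] [IsStrictOrderedRing 𝕜] {s : Set 𝕜} {f : 𝕜 → 𝕜}
  {a b c z : 𝕜}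

theorem ConvexOn.le_of_apply_lt_of_apply_le (hf : ConvexOn 𝕜 s f) (ha : a ∈ s) (hz : z ∈ s)
    (hab : a < b) (hfab : f a ≤ f b) (hfz : f z < f a) : z ≤ b := by
  by_contra! hbz
  have hslope := hf.slope_mono_adjacent ha hz hab hbz
  have hleft : 0 ≤ (f b - f a) / (b - a) := div_nonneg (sub_nonneg.2 hfab) (sub_pos.2 hab).le
  have hright := hleft.trans hslope
  rw [le_div_iff₀ (sub_pos.2 hbz), zero_mul] at hright
  linarith

theorem ConvexOn.apply_add_slope_mul_le_of_le (hf : ConvexOn 𝕜 s f) (hz : z ∈ s) (hc : c ∈ s)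
    (hzb : z ≤ b) (hbc : b < c) : f b + slope f b c * (z - b) ≤ f z := by
  rcases hzb.lt_or_eq with hzb | rfl
  · have hslope := hf.slope_mono_adjacent hz hc hzb hbc
    rw [div_le_iff₀ (sub_pos.2 hzb), ← slope_def_field] at hslope
    linarith
  · simp

theorem ConvexOn.le_add_div_slope (hf : ConvexOn 𝕜 s f) (hz : z ∈ s) (hc : c ∈ s)
    (hzb : z ≤ b) (hbc : b < c) (hfz : f z ≤ f a) (hpos : 0 < slope f b c) :
    z ≤ b + (f a - f b) / slope f b c := by
  have hsecant := hf.apply_add_slope_mul_le_of_le hz hc hzb hbc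
  rw [← sub_le_iff_le_add', le_div_iff₀ hpos]
  linarith

end SecantLine

/-- If i_m is the grid argmin and the chord slope to its right is positive,
then the minimizer of f lies to the left of the intersection point t*. -/
theorem stmt17 (f : ℝ → ℝ) (n im : ℕ) (z : ℝ)
    (hf : ConvexOn ℝ (Icc (0:ℝ) 1) f) (hz : UniqueMinOn f z) (hn : 0 < n)
    (him : im + 2 ≤ n) (hmin : ∀ i ≤ n, f ((im:ℝ)/n) ≤ f ((i:ℝ)/n))
    (hslope : 0 < (n:ℝ) * (f (((im:ℝ)+2)/n) - f (((im:ℝ)+1)/n))) :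
    z ≤ ((im:ℝ)+1)/n +
      (f ((im:ℝ)/n) - f (((im:ℝ)+1)/n)) /
        ((n:ℝ) * (f (((im:ℝ)+2)/n) - f (((im:ℝ)+1)/n))) := by
  have hN : (0:ℝ) < n := by exact_mod_cast hn
  have hgrid : ∀ x : ℝ, 0 ≤ x → x ≤ n → x / n ∈ Icc (0:ℝ) 1 :=
    fun x hx hxn ↦ ⟨by positivity, div_le_one_of_le₀ hxn hN.le⟩
  have him' : (im:ℝ) + 2 ≤ n := by exact_mod_cast him
  have hfab : f ((im:ℝ) / n) ≤ f (((im:ℝ) + 1) / n) := by exact_mod_cast hmin (im + 1) (by omega)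
  set a : ℝ := (im:ℝ) / n
  set b : ℝ := ((im:ℝ) + 1) / n
  set c : ℝ := ((im:ℝ) + 2) / n
  have ha : a ∈ Icc (0:ℝ) 1 := hgrid im (by positivity) (by linarith)
  have hc : c ∈ Icc (0:ℝ) 1 := hgrid (im + 2) (by positivity) him'
  have hab : a < b := by simp only [a, b]; gcongr; linarith
  have hcb : c - b = 1 / n := by simp only [b, c]; field_simp; ring
  have hbc : b < c := sub_pos.1 (by rw [hcb]; positivity)
  have hslope_eq : slope f b c = n * (f c - f b) := by
    rw [slope_def_field, hcb]; field_simp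
  obtain ⟨hfz, hzb⟩ : f z ≤ f a ∧ z ≤ b := by
    rcases eq_or_ne z a with rfl | hza
    · exact ⟨le_rfl, hab.le⟩
    · have hlt := hz.2 a ha hza.symm
      exact ⟨hlt.le, hf.le_of_apply_lt_of_apply_le ha hz.1 hab hfab hlt⟩
  rw [← hslope_eq] at hslope ⊢
  exact hf.le_add_div_slope hz.1 hc hzb hbc hfz hslope
end
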